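/- arXiv:1612.06246 — 3 statements merged into one kernel-verified Lean document; each statement's English description precedes it below -/
import Mathlib

section
/- Online Mirror Descent with time-varying log-barrier mirror maps ψ_t(p) = −∑_{i=1}^M (1/η_{t,i}) ln pᵢ on the probability simplex Δ_M, with nonnegative loss vectors ℓ_t, satisfies for every u ∈ Δ_M: ∑_{t=1}^T ⟨p_t − u, ℓ_t⟩ ≤ ∑_{t=1}^T (D_{ψ_t}(u, p_t) − D_{ψ_t}(u, p_{t+1})) + ∑_{t=1}^T ∑_{i=1}^M η_{t,i} p_{t,i}² ℓ_{t,i}², where D_ψ denotes the Bregman divergence of ψ and p_{t+1} = argmin_{p ∈ Δ_M} D_{ψ_t}(p, p̃_{t+1}) with ∇ψ_t(p̃_{t+1}) = ∇ψ_t(p_t) − ℓ_t. -/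
open Finset

/-- The probability simplex in `ℝ^M`. -/
def simplex (M : ℕ) : Set (Fin M → ℝ) :=
  {p | (∀ i, 0 ≤ p i) ∧ ∑ i, p i = 1}

/-- The log-barrier mirror map with per-coordinate learning rates. -/
noncomputable def logBarrier {M : ℕ} (η : Fin M → ℝ) (p : Fin M → ℝ) : ℝ :=
  -∑ i, (1 / η i) * Real.log (p i)

/-- Bregman divergence of the log-barrier mirror map (its gradient at `q` is
`i ↦ -1/(η i * q i)`). -/
noncomputable def logBarrierBregman {M : ℕ} (η : Fin M → ℝ) (p q : Fin M → ℝ) : ℝ :=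
  logBarrier η p - logBarrier η q - ∑ i, (-(1 / (η i * q i))) * (p i - q i)

/-!
Each round is bounded separately. Since `ℓ_t = ∇ψ_t(p_t) - ∇ψ_t(p̃_{t+1})`, the three-point
identity gives `⟨p_t - u, ℓ_t⟩ = D(u, p_t) - D(u, p̃_{t+1}) + D(p_t, p̃_{t+1})`. First-order
optimality of the projection `p_{t+1}` yields the generalized Pythagorean inequality
`D(u, p_{t+1}) + D(p_{t+1}, p̃_{t+1}) ≤ D(u, p̃_{t+1})`, and `D ≥ 0`. Finally the mirror step
gives `p_{t,i} / p̃_{t+1,i} = 1 + a_i` with `a_i = η_{t,i} p_{t,i} ℓ_{t,i} ≥ 0`, so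
`D(p_t, p̃_{t+1}) = ∑ (a_i - ln (1 + a_i)) / η_{t,i} ≤ ∑ a_i² / η_{t,i}`.
-/

theorem IsMinOn.hasDerivWithinAt_Icc_nonneg {f : ℝ → ℝ} {f' a b : ℝ} (hab : a < b)
    (hmin : IsMinOn f (Set.Icc a b) a) (hf : HasDerivWithinAt f f' (Set.Icc a b) a) : 0 ≤ f' := by
  have hdir : b - a ∈ posTangentConeAt (Set.Icc a b) a :=
    sub_mem_posTangentConeAt_of_segment_subset (segment_eq_Icc hab.le).subset
  have := hmin.localize.hasFDerivWithinAt_nonneg hf.hasFDerivWithinAt hdir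
  simp only [ContinuousLinearMap.toSpanSingleton_apply, smul_eq_mul] at this
  exact nonneg_of_mul_nonneg_right this (sub_pos.2 hab)

theorem convex_simplex (M : ℕ) : Convex ℝ (simplex M) := convex_stdSimplex ℝ (Fin M)

theorem Real.sub_log_one_add_le_sq {a : ℝ} (ha : 0 ≤ a) : a - Real.log (1 + a) ≤ a ^ 2 := by
  have hlog := Real.one_sub_inv_le_log_of_pos (by positivity : 0 < 1 + a)
  have h : a - (1 - (1 + a)⁻¹) = a ^ 2 / (1 + a) := by field_simp; ring
  have h2 : a ^ 2 / (1 + a) ≤ a ^ 2 := div_le_self (by positivity) (by linarith)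
  linarith

section LogBarrier

variable {M : ℕ} {η : Fin M → ℝ}

/-- `ψ(u)` cancels, so this holds even where `Real.log (u i)` is a junk value. -/
theorem logBarrierBregman_three_point (u x q : Fin M → ℝ) :
    logBarrierBregman η u x - logBarrierBregman η u q + logBarrierBregman η x q =
      ∑ i, (1 / (η i * x i) - 1 / (η i * q i)) * (u i - x i) := by
  simp only [logBarrierBregman, logBarrier, ← Finset.sum_neg_distrib, ← Finset.sum_sub_distrib,
    ← Finset.sum_add_distrib]
  exact Finset.sum_congr rfl fun i _ => by ring

theorem logBarrierBregman_eq_sum {p q : Fin M → ℝ} (hp : ∀ i, 0 < p i) (hq : ∀ i, 0 < q i) :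
    logBarrierBregman η p q =
      ∑ i, 1 / η i * (p i / q i - 1 - Real.log (p i / q i)) := by
  simp only [logBarrierBregman, logBarrier, ← Finset.sum_neg_distrib, ← Finset.sum_sub_distrib]
  refine Finset.sum_congr rfl fun i _ => ?_
  rw [Real.log_div (hp i).ne' (hq i).ne']
  linear_combination (-(1 / η i)) * mul_inv_cancel₀ (hq i).ne'

theorem logBarrierBregman_nonneg (hη : ∀ i, 0 < η i) {p q : Fin M → ℝ} (hp : ∀ i, 0 < p i)
    (hq : ∀ i, 0 < q i) : 0 ≤ logBarrierBregman η p q := by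
  rw [logBarrierBregman_eq_sum hp hq]
  refine Finset.sum_nonneg fun i _ => mul_nonneg (by simpa using (hη i).le) ?_
  linarith [Real.log_le_sub_one_of_pos (div_pos (hp i) (hq i))]

theorem hasDerivAt_logBarrierBregman_line {y : Fin M → ℝ} (hy : ∀ i, 0 < y i) (d q : Fin M → ℝ) :
    HasDerivAt (fun ε : ℝ => logBarrierBregman η (y + ε • d) q)
      (∑ i, (1 / (η i * q i) - 1 / (η i * y i)) * d i) 0 := by
  have hline (i : Fin M) : HasDerivAt (fun ε : ℝ => y i + ε * d i) (d i) 0 := by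
    simpa using ((hasDerivAt_id (0 : ℝ)).mul_const (d i)).const_add (y i)
  have hlog (i : Fin M) : HasDerivAt (fun ε : ℝ => Real.log (y i + ε * d i)) (d i / y i) 0 := by
    simpa using (hline i).log (by simpa using (hy i).ne')
  have h := ((HasDerivAt.fun_sum (u := Finset.univ) fun i _ =>
    (hlog i).const_mul (1 / η i)).fun_neg.sub_const (logBarrier η q)).fun_sub
    (HasDerivAt.fun_sum (u := Finset.univ) fun i _ =>
      ((hline i).sub_const (q i)).const_mul (-(1 / (η i * q i))))
  refine (h.congr_deriv ?_).congr_of_eventuallyEq (Filter.Eventually.of_forall fun ε => ?_)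
  · rw [← Finset.sum_neg_distrib, ← Finset.sum_sub_distrib]
    exact Finset.sum_congr rfl fun i _ => by ring
  · simp [logBarrierBregman, logBarrier]

theorem logBarrierBregman_variational_ineq {y q u : Fin M → ℝ} (hy : ∀ i, 0 < y i)
    (hys : y ∈ simplex M) (hu : u ∈ simplex M)
    (hmin : IsMinOn (fun z => logBarrierBregman η z q) (simplex M) y) :
    0 ≤ ∑ i, (1 / (η i * q i) - 1 / (η i * y i)) * (u i - y i) := by
  refine IsMinOn.hasDerivWithinAt_Icc_nonneg zero_lt_one (fun ε hε => ?_)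
    (hasDerivAt_logBarrierBregman_line hy (u - y) q).hasDerivWithinAt
  have hmem : y + ε • (u - y) ∈ simplex M := (convex_simplex M).add_smul_sub_mem hys hu hε
  simpa using hmin hmem

theorem logBarrierBregman_add_le_of_isMinOn {y q u : Fin M → ℝ} (hy : ∀ i, 0 < y i)
    (hys : y ∈ simplex M) (hu : u ∈ simplex M)
    (hmin : IsMinOn (fun z => logBarrierBregman η z q) (simplex M) y) :
    logBarrierBregman η u y + logBarrierBregman η y q ≤ logBarrierBregman η u q := by
  have h3 := logBarrierBregman_three_point (η := η) u y q
  have hfo := logBarrierBregman_variational_ineq hy hys hu hmin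
  have hneg : ∑ i, (1 / (η i * y i) - 1 / (η i * q i)) * (u i - y i) =
      -∑ i, (1 / (η i * q i) - 1 / (η i * y i)) * (u i - y i) := by
    rw [← Finset.sum_neg_distrib]
    exact Finset.sum_congr rfl fun i _ => by ring
  linarith

theorem logBarrierBregman_le_of_mirror_step (hη : ∀ i, 0 < η i) {x q ℓ : Fin M → ℝ}
    (hx : ∀ i, 0 < x i) (hq : ∀ i, 0 < q i) (hℓ : ∀ i, 0 ≤ ℓ i)
    (hstep : ∀ i, -(1 / (η i * q i)) = -(1 / (η i * x i)) - ℓ i) :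
    logBarrierBregman η x q ≤ ∑ i, η i * x i ^ 2 * ℓ i ^ 2 := by
  rw [logBarrierBregman_eq_sum hx hq]
  refine Finset.sum_le_sum fun i _ => ?_
  have hηi := hη i
  have hxi := hx i
  have hratio : x i / q i = 1 + η i * x i * ℓ i := by
    have := hstep i
    have hqi := hq i
    field_simp at this ⊢
    linarith
  rw [hratio, add_sub_cancel_left]
  calc 1 / η i * (η i * x i * ℓ i - Real.log (1 + η i * x i * ℓ i))
      ≤ 1 / η i * (η i * x i * ℓ i) ^ 2 :=
        mul_le_mul_of_nonneg_left (Real.sub_log_one_add_le_sq (by have := hℓ i; positivity))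
          (by positivity)
    _ = η i * x i ^ 2 * ℓ i ^ 2 := by field_simp

theorem logBarrier_omd_round_regret (hη : ∀ i, 0 < η i) {x y q u ℓ : Fin M → ℝ}
    (hx : ∀ i, 0 < x i) (hy : ∀ i, 0 < y i) (hq : ∀ i, 0 < q i) (hℓ : ∀ i, 0 ≤ ℓ i)
    (hys : y ∈ simplex M) (hu : u ∈ simplex M)
    (hstep : ∀ i, -(1 / (η i * q i)) = -(1 / (η i * x i)) - ℓ i)
    (hmin : IsMinOn (fun z => logBarrierBregman η z q) (simplex M) y) :
    ∑ i, (x i - u i) * ℓ i ≤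
      logBarrierBregman η u x - logBarrierBregman η u y + ∑ i, η i * x i ^ 2 * ℓ i ^ 2 := by
  have hloss : ∑ i, (x i - u i) * ℓ i =
      logBarrierBregman η u x - logBarrierBregman η u q + logBarrierBregman η x q := by
    rw [logBarrierBregman_three_point]
    exact Finset.sum_congr rfl fun i _ => by linear_combination (x i - u i) * hstep i
  have hpyth := logBarrierBregman_add_le_of_isMinOn hy hys hu hmin
  have hproj_nonneg := logBarrierBregman_nonneg hη hy hq
  have hlocal := logBarrierBregman_le_of_mirror_step hη hx hq hℓ hstep
  linarith

end LogBarrier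

theorem log_barrier_omd_regret (M T : ℕ)
    (η : Fin T → Fin M → ℝ) (hη : ∀ t i, 0 < η t i)
    (ℓ : Fin T → Fin M → ℝ) (hℓ : ∀ t i, 0 ≤ ℓ t i)
    (p : Fin (T + 1) → Fin M → ℝ)
    (hp : ∀ t, p t ∈ simplex M) (hppos : ∀ t i, 0 < p t i)
    (ptil : Fin T → Fin M → ℝ) (hptilpos : ∀ t i, 0 < ptil t i)
    -- unconstrained mirror step: ∇ψ_t(p̃_{t+1}) = ∇ψ_t(p_t) − ℓ_t
    (hstep : ∀ (t : Fin T) i,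
      -(1 / (η t i * ptil t i)) = -(1 / (η t i * p t.castSucc i)) - ℓ t i)
    -- Bregman projection: p_{t+1} = argmin over the simplex of D_{ψ_t}(·, p̃_{t+1})
    (hproj : ∀ (t : Fin T), ∀ q ∈ simplex M,
      logBarrierBregman (η t) (p t.succ) (ptil t) ≤ logBarrierBregman (η t) q (ptil t)) :
    ∀ u ∈ simplex M,
      ∑ t : Fin T, ∑ i, (p t.castSucc i - u i) * ℓ t i ≤
        (∑ t : Fin T, (logBarrierBregman (η t) u (p t.castSucc)
            - logBarrierBregman (η t) u (p t.succ)))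
        + ∑ t : Fin T, ∑ i, η t i * (p t.castSucc i) ^ 2 * (ℓ t i) ^ 2 := by
  intro u hu
  rw [← Finset.sum_add_distrib]
  exact Finset.sum_le_sum fun t _ =>
    logBarrier_omd_round_regret (hη t) (hppos t.castSucc) (hppos t.succ) (hptilpos t) (hℓ t)
      (hp t.succ) hu (hstep t) (hproj t)
end

section
/- Let M ≥ 2, let p ∈ Δ_M have strictly positive coordinates, let ℓ ∈ R^M and η ∈ R_{>0}^M. Define F(λ) = ∑_{i=1}^M 1/(1/pᵢ + ηᵢ(ℓᵢ − λ)) wherever all denominators are positive. Then there exists λ ∈ [minᵢ ℓᵢ, maxᵢ ℓᵢ] such that F(λ) = 1, and the resulting vector q with 1/qᵢ = 1/pᵢ + ηᵢ(ℓᵢ − λ) lies in the probability simplex with strictly positive coordinates. -/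
/-!
Each denominator `1/pᵢ + ηᵢ(ℓᵢ - λ) = ηᵢ(λᵢ* - λ)` is affine and decreasing in `λ`, with pole
`λᵢ* = ℓᵢ + 1/(ηᵢpᵢ)`, so `F` is continuous on `[min ℓ, min λ*)`. At `λ = min ℓ` every term is at
most `pᵢ`, so `F ≤ 1`; just below the smallest pole the corresponding term alone exceeds `1`. The
intermediate value theorem gives a root, and it cannot lie above `max ℓ`, where every term exceeds
`pᵢ` and hence `F > 1`.
-/

open Finset

section

variable {ι : Type*} (p ℓ η : ι → ℝ)

/-- `1 / qᵢ` for the candidate projection `q` at multiplier `lam`. -/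
noncomputable def barrierDenom (lam : ℝ) (i : ι) : ℝ := 1 / p i + η i * (ℓ i - lam)

noncomputable def barrierPole (i : ι) : ℝ := ℓ i + (η i * p i)⁻¹

variable {p ℓ η}

theorem barrierDenom_eq_mul_sub {i : ι} (hp : p i ≠ 0) (hη : η i ≠ 0) (lam : ℝ) :
    barrierDenom p ℓ η lam i = η i * (barrierPole p ℓ η i - lam) := by
  unfold barrierDenom barrierPole
  field_simp
  ring

theorem barrierDenom_pos_iff {i : ι} (hp : p i ≠ 0) (hη : 0 < η i) {lam : ℝ} :
    0 < barrierDenom p ℓ η lam i ↔ lam < barrierPole p ℓ η i := by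
  rw [barrierDenom_eq_mul_sub hp hη.ne', mul_pos_iff_of_pos_left hη, sub_pos]

theorem inv_barrierDenom_le {i : ι} (hp : 0 < p i) (hη : 0 ≤ η i) {lam : ℝ} (h : lam ≤ ℓ i) :
    (barrierDenom p ℓ η lam i)⁻¹ ≤ p i := by
  have hle : 1 / p i ≤ barrierDenom p ℓ η lam i :=
    le_add_of_nonneg_right (mul_nonneg hη (sub_nonneg.mpr h))
  simpa using inv_anti₀ (one_div_pos.mpr hp) hle

theorem lt_inv_barrierDenom {i : ι} (hη : 0 < η i) {lam : ℝ} (h : ℓ i < lam)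
    (hpos : 0 < barrierDenom p ℓ η lam i) : p i < (barrierDenom p ℓ η lam i)⁻¹ := by
  have hlt : barrierDenom p ℓ η lam i < 1 / p i :=
    add_lt_of_neg_right _ (mul_neg_of_pos_of_neg hη (sub_neg.mpr h))
  simpa using inv_strictAnti₀ hpos hlt

variable [Fintype ι]

theorem continuousOn_sum_inv_barrierDenom {s : Set ℝ}
    (h : ∀ lam ∈ s, ∀ i, barrierDenom p ℓ η lam i ≠ 0) :
    ContinuousOn (fun lam => ∑ i, (barrierDenom p ℓ η lam i)⁻¹) s := by
  refine continuousOn_finsetSum _ fun i _ => ContinuousOn.inv₀ ?_ fun lam hlam => h lam hlam i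
  unfold barrierDenom
  fun_prop

theorem sum_inv_barrierDenom_le_one (hp : ∀ i, 0 < p i) (hpsum : ∑ i, p i = 1)
    (hη : ∀ i, 0 ≤ η i) {lam : ℝ} (h : ∀ i, lam ≤ ℓ i) :
    ∑ i, (barrierDenom p ℓ η lam i)⁻¹ ≤ 1 :=
  hpsum ▸ sum_le_sum fun i _ => inv_barrierDenom_le (hp i) (hη i) (h i)

theorem exists_le_of_sum_inv_barrierDenom_eq_one (hpsum : ∑ i, p i = 1) (hη : ∀ i, 0 < η i)
    {lam : ℝ} (hpos : ∀ i, 0 < barrierDenom p ℓ η lam i)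
    (hsum : ∑ i, (barrierDenom p ℓ η lam i)⁻¹ = 1) : ∃ i, lam ≤ ℓ i := by
  by_contra! h
  have hne : (univ : Finset ι).Nonempty := nonempty_of_sum_ne_zero (hpsum ▸ one_ne_zero)
  have hlt : ∑ i, p i < ∑ i, (barrierDenom p ℓ η lam i)⁻¹ :=
    sum_lt_sum_of_nonempty hne fun i _ => lt_inv_barrierDenom (hη i) (h i) (hpos i)
  linarith

theorem exists_one_le_sum_inv_barrierDenom [Nonempty ι] (hp : ∀ i, 0 < p i)
    (hη : ∀ i, 0 < η i) {a : ℝ} (ha : ∀ i, 0 < barrierDenom p ℓ η a i) :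
    ∃ c, a ≤ c ∧ (∀ i, 0 < barrierDenom p ℓ η c i) ∧
      1 ≤ ∑ i, (barrierDenom p ℓ η c i)⁻¹ := by
  obtain ⟨j, -, hj⟩ := exists_min_image univ (barrierPole p ℓ η) univ_nonempty
  -- Close enough to the smallest pole that the `j`-th denominator is at most `1`.
  set c := max a (barrierPole p ℓ η j - (η j)⁻¹)
  have hcj : c < barrierPole p ℓ η j :=
    max_lt ((barrierDenom_pos_iff (hp j).ne' (hη j)).mp (ha j))
      (sub_lt_self _ (inv_pos.mpr (hη j)))
  have hpos : ∀ i, 0 < barrierDenom p ℓ η c i := fun i =>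
    (barrierDenom_pos_iff (hp i).ne' (hη i)).mpr (hcj.trans_le (hj i (mem_univ i)))
  have hdenom_le : barrierDenom p ℓ η c j ≤ 1 := by
    rw [barrierDenom_eq_mul_sub (hp j).ne' (hη j).ne', ← mul_inv_cancel₀ (hη j).ne']
    have hgap : barrierPole p ℓ η j - c ≤ (η j)⁻¹ := by
      linarith [le_max_right a (barrierPole p ℓ η j - (η j)⁻¹)]
    exact mul_le_mul_of_nonneg_left hgap (hη j).le
  refine ⟨c, le_max_left _ _, hpos, ?_⟩
  calc (1 : ℝ) ≤ (barrierDenom p ℓ η c j)⁻¹ := one_le_inv₀ (hpos j) |>.mpr hdenom_le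
    _ ≤ ∑ i, (barrierDenom p ℓ η c i)⁻¹ :=
      single_le_sum (fun i _ => (inv_pos.mpr (hpos i)).le) (mem_univ j)

theorem exists_sum_inv_barrierDenom_eq_one [Nonempty ι] (hp : ∀ i, 0 < p i)
    (hpsum : ∑ i, p i = 1) (hη : ∀ i, 0 < η i) {a : ℝ} (ha : ∀ i, a ≤ ℓ i) :
    ∃ lam, a ≤ lam ∧ (∀ i, 0 < barrierDenom p ℓ η lam i) ∧
      ∑ i, (barrierDenom p ℓ η lam i)⁻¹ = 1 := by
  have hposa : ∀ i, 0 < barrierDenom p ℓ η a i := fun i =>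
    add_pos_of_pos_of_nonneg (one_div_pos.mpr (hp i))
      (mul_nonneg (hη i).le (sub_nonneg.mpr (ha i)))
  obtain ⟨c, hac, hposc, hFc⟩ := exists_one_le_sum_inv_barrierDenom hp hη hposa
  have hposOn : ∀ lam ∈ Set.Icc a c, ∀ i, 0 < barrierDenom p ℓ η lam i := fun lam hlam i =>
    (barrierDenom_pos_iff (hp i).ne' (hη i)).mpr
      (hlam.2.trans_lt ((barrierDenom_pos_iff (hp i).ne' (hη i)).mp (hposc i)))
  have hFa := sum_inv_barrierDenom_le_one hp hpsum (fun i => (hη i).le) ha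
  obtain ⟨lam, hlam, hF⟩ := intermediate_value_Icc hac
    (continuousOn_sum_inv_barrierDenom fun lam hlam i => (hposOn lam hlam i).ne') ⟨hFa, hFc⟩
  exact ⟨lam, hlam.1, hposOn lam hlam, hF⟩

end

theorem log_barrier_projection_lambda_general (M : ℕ)
    (hne : (Finset.univ : Finset (Fin M)).Nonempty)
    (p ℓ η : Fin M → ℝ)
    (hppos : ∀ i, 0 < p i) (hpsum : ∑ i, p i = 1)
    (hη : ∀ i, 0 < η i) :
    ∃ lam ∈ Set.Icc (Finset.univ.inf' hne ℓ) (Finset.univ.sup' hne ℓ),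
      (∀ i, 0 < 1 / p i + η i * (ℓ i - lam)) ∧
      (∑ i, (1 / p i + η i * (ℓ i - lam))⁻¹ = 1) ∧
      (∀ i, 0 < (1 / p i + η i * (ℓ i - lam))⁻¹) := by
  have := univ_nonempty_iff.mp hne
  obtain ⟨lam, hlo, hpos, hsum⟩ :=
    exists_sum_inv_barrierDenom_eq_one (a := univ.inf' hne ℓ) hppos hpsum hη
      fun i => inf'_le ℓ (mem_univ i)
  obtain ⟨i, hi⟩ := exists_le_of_sum_inv_barrierDenom_eq_one hpsum hη hpos hsum
  exact ⟨lam, ⟨hlo, hi.trans (le_sup' ℓ (mem_univ i))⟩, hpos, hsum,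
    fun i => inv_pos.mpr (hpos i)⟩

theorem log_barrier_projection_lambda (M : ℕ) (hM : 2 ≤ M)
    (hne : (Finset.univ : Finset (Fin M)).Nonempty)
    (p ℓ η : Fin M → ℝ)
    (hppos : ∀ i, 0 < p i) (hpsum : ∑ i, p i = 1)
    (hη : ∀ i, 0 < η i) :
    ∃ lam ∈ Set.Icc (Finset.univ.inf' hne ℓ) (Finset.univ.sup' hne ℓ),
      (∀ i, 0 < 1 / p i + η i * (ℓ i - lam)) ∧
      (∑ i, (1 / p i + η i * (ℓ i - lam))⁻¹ = 1) ∧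
      (∀ i, 0 < (1 / p i + η i * (ℓ i - lam))⁻¹) :=
  log_barrier_projection_lambda_general M hne p ℓ η hppos hpsum hη
end

section
/- Let ψ be a differentiable strictly convex function on a convex open set containing a convex set K, and let q be arbitrary in the domain. If p* = argmin_{p ∈ K} D_ψ(p, q), then for every u ∈ K: D_ψ(u, q) ≥ D_ψ(u, p*) + D_ψ(p*, q) (generalized Pythagorean theorem for Bregman divergences). -/
/-!
Since `p*` minimizes the differentiable function `D(·, q)` over the convex set `K`, the
first-order optimality condition gives `⟪∇ψ(p*) - ∇ψ(q), u - p*⟫ ≥ 0` for `u ∈ K`, and the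
three-point identity says that this inner product is exactly `D(u, q) - D(u, p*) - D(p*, q)`.
-/

open RealInnerProductSpace

section Bregman

variable {F : Type*} [NormedAddCommGroup F] [InnerProductSpace ℝ F]

def bregmanDiv (ψ : F → ℝ) (g : F → F) (a b : F) : ℝ := ψ a - ψ b - ⟪g b, a - b⟫

theorem bregmanDiv_add_bregmanDiv_add_inner (ψ : F → ℝ) (g : F → F) (u p q : F) :
    bregmanDiv ψ g u p + bregmanDiv ψ g p q + ⟪g p - g q, u - p⟫ = bregmanDiv ψ g u q := by
  have hsplit : u - q = (u - p) + (p - q) := by abel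
  simp only [bregmanDiv, hsplit, inner_add_right, inner_sub_left]
  ring

variable [CompleteSpace F]

theorem hasGradientAt_inner_sub (c q x : F) : HasGradientAt (fun y => ⟪c, y - q⟫) c x := by
  rw [hasGradientAt_iff_hasFDerivAt]
  have h := ((InnerProductSpace.toDual ℝ F c).hasFDerivAt (x := x)).sub_const ⟪c, q⟫
  simp only [InnerProductSpace.toDual_apply_apply, ← inner_sub_right] at h
  exact h

theorem hasGradientAt_bregmanDiv_left {ψ : F → ℝ} {g : F → F} {p : F} (q : F)
    (hψ : HasGradientAt ψ (g p) p) : HasGradientAt (bregmanDiv ψ g · q) (g p - g q) p := by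
  rw [hasGradientAt_iff_hasFDerivAt, map_sub] at *
  exact (hψ.sub_const (ψ q)).sub (hasGradientAt_inner_sub (g q) q p).hasFDerivAt

theorem IsMinOn.inner_gradient_sub_nonneg {f : F → ℝ} {f' p u : F} {K : Set F}
    (hK : Convex ℝ K) (hmin : IsMinOn f K p) (hf : HasGradientAt f f' p) (hp : p ∈ K)
    (hu : u ∈ K) : 0 ≤ ⟪f', u - p⟫ := by
  simpa using hmin.localize.hasFDerivWithinAt_nonneg hf.hasFDerivAt.hasFDerivWithinAt
    (sub_mem_posTangentConeAt_of_segment_subset (hK.segment_subset hp hu))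

end Bregman

theorem bregman_generalized_pythagorean_general (n : ℕ)
    (ψ : EuclideanSpace ℝ (Fin n) → ℝ) (g : EuclideanSpace ℝ (Fin n) → EuclideanSpace ℝ (Fin n))
    (s K : Set (EuclideanSpace ℝ (Fin n)))
    (hKs : K ⊆ s) (hKc : Convex ℝ K)
    (hgrad : ∀ x ∈ s, HasGradientAt ψ (g x) x)
    (D : EuclideanSpace ℝ (Fin n) → EuclideanSpace ℝ (Fin n) → ℝ)
    (hD : ∀ a b, D a b = ψ a - ψ b - ⟪g b, a - b⟫)
    (q : EuclideanSpace ℝ (Fin n))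
    (pstar : EuclideanSpace ℝ (Fin n)) (hpstar : pstar ∈ K)
    (hmin : ∀ r ∈ K, D pstar q ≤ D r q) :
    ∀ u ∈ K, D u pstar + D pstar q ≤ D u q := by
  intro u hu
  obtain rfl : D = bregmanDiv ψ g := funext fun a => funext (hD a)
  have hopt : 0 ≤ ⟪g pstar - g q, u - pstar⟫ :=
    (isMinOn_iff.2 hmin).inner_gradient_sub_nonneg hKc
      (hasGradientAt_bregmanDiv_left q (hgrad pstar (hKs hpstar))) hpstar hu
  linarith [bregmanDiv_add_bregmanDiv_add_inner ψ g u pstar q]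

/-- Generalized Pythagorean theorem for Bregman divergences. -/
theorem bregman_generalized_pythagorean (n : ℕ)
    (ψ : EuclideanSpace ℝ (Fin n) → ℝ) (g : EuclideanSpace ℝ (Fin n) → EuclideanSpace ℝ (Fin n))
    (s K : Set (EuclideanSpace ℝ (Fin n)))
    (hso : IsOpen s) (hsc : Convex ℝ s) (hKs : K ⊆ s) (hKc : Convex ℝ K)
    (hstrict : StrictConvexOn ℝ s ψ)
    (hgrad : ∀ x ∈ s, HasGradientAt ψ (g x) x)
    (D : EuclideanSpace ℝ (Fin n) → EuclideanSpace ℝ (Fin n) → ℝ)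
    (hD : ∀ a b, D a b = ψ a - ψ b - ⟪g b, a - b⟫)
    (q : EuclideanSpace ℝ (Fin n)) (hq : q ∈ s)
    (pstar : EuclideanSpace ℝ (Fin n)) (hpstar : pstar ∈ K)
    (hmin : ∀ r ∈ K, D pstar q ≤ D r q) :
    ∀ u ∈ K, D u pstar + D pstar q ≤ D u q :=
  bregman_generalized_pythagorean_general n ψ g s K hKs hKc hgrad D hD q pstar hpstar hmin
end
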